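/- (Theorem 3) For every integer p ≥ 1 and every odd positive integer m, the Dedekind-type DC sum satisfies T_p(1, m) = −Σ_{v=0}^{p} C(p,v) E_v m^{−(p+1−v)} ( E_{p−v+1}(m) + E_{p−v+1} ), where E_v is the v-th Euler number and E_{p−v+1}(x) the (p−v+1)-th Euler polynomial. -/

import Mathlib

open Finset

/-- The Euler numbers `E_n`, defined by `E_0 = 1` and the recurrence
`∑_{l=0}^{n} C(n,l) E_l + E_n = 0` for `n ≥ 1`. -/
def eulerNumber : ℕ → ℚ
  | 0 => 1
  | n + 1 => -(∑ l : Fin (n + 1), ((n + 1).choose l : ℚ) * eulerNumber l) / 2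

/-- The Euler polynomials `E_n(x) = ∑_{l=0}^{n} C(n,l) E_l x^{n-l}`. -/
noncomputable def eulerPoly (n : ℕ) (x : ℝ) : ℝ :=
  ∑ l ∈ Finset.range (n + 1), (n.choose l : ℝ) * (eulerNumber l : ℝ) * x ^ (n - l)

/-- The Euler function `Ē_p(x) = (-1)^⌊x⌋ E_p(x - ⌊x⌋)`. -/
noncomputable def eulerFun (p : ℕ) (x : ℝ) : ℝ := (-1 : ℝ) ^ ⌊x⌋ * eulerPoly p (x - ⌊x⌋)

/-- The Dedekind-type DC sum `T_p(h,k) = 2 ∑_{u=1}^{k-1} (-1)^{u-1} (u/k) Ē_p(hu/k)`. -/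
noncomputable def dcSum (p h k : ℕ) : ℝ :=
  2 * ∑ u ∈ Finset.Ico 1 k, (-1 : ℝ) ^ (u - 1) * ((u : ℝ) / k) * eulerFun p (h * u / k)

/-! For `0 < u < m` the Euler function agrees with `E_p` at `u / m`, so expanding `E_p` turns
`T_p(1, m)` into a combination of alternating power sums `∑_{u<m} (-1)^u u^k`. These telescope
to `(E_k - (-1)^m E_k(m)) / 2`, because `E_k(x + 1) + E_k(x) = 2 x^k`; the latter follows from
the Appell property `E_k(x + y) = ∑_j C(k,j) E_{k-j}(x) y^j` together with `E_k(1) = -E_k`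
for `k ≥ 1`, which is the defining recurrence of the Euler numbers. -/

theorem Nat.choose_mul_choose_sub_comm (n l j : ℕ) :
    n.choose l * (n - l).choose j = n.choose j * (n - j).choose l := by
  have hl := Nat.choose_mul (n := n) (k := l + j) (Nat.le_add_right l j)
  have hj := Nat.choose_mul (n := n) (k := l + j) (Nat.le_add_left j l)
  rw [Nat.add_sub_cancel_left] at hl
  rw [Nat.add_sub_cancel] at hj
  rw [← hl, ← hj, Nat.choose_symm_add]

theorem sum_range_choose_mul_eulerNumber {n : ℕ} (hn : n ≠ 0) :
    ∑ l ∈ range (n + 1), (n.choose l : ℝ) * eulerNumber l = -eulerNumber n := by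
  obtain ⟨k, rfl⟩ : ∃ k, n = k + 1 := ⟨n - 1, by omega⟩
  have hrec : (eulerNumber (k + 1) : ℝ) =
      -(∑ l ∈ range (k + 1), ((k + 1).choose l : ℝ) * eulerNumber l) / 2 := by
    rw [eulerNumber, ← Fin.sum_univ_eq_sum_range (fun l => ((k + 1).choose l : ℝ) * eulerNumber l)]
    push_cast
    rfl
  rw [sum_range_succ, Nat.choose_self, Nat.cast_one]
  linarith

theorem eulerPoly_zero (n : ℕ) : eulerPoly n 0 = eulerNumber n := by
  rw [eulerPoly, sum_range_succ, sum_eq_zero fun l hl => by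
    rw [zero_pow (Nat.sub_ne_zero_of_lt (mem_range.mp hl)), mul_zero]]
  simp

theorem eulerPoly_one {n : ℕ} (hn : n ≠ 0) : eulerPoly n 1 = -eulerNumber n := by
  simpa [eulerPoly] using sum_range_choose_mul_eulerNumber hn

theorem eulerPoly_one_add_eulerPoly_zero (n : ℕ) :
    eulerPoly n 1 + eulerPoly n 0 = if n = 0 then 2 else 0 := by
  split_ifs with hn
  · subst hn
    norm_num [eulerPoly, eulerNumber]
  · rw [eulerPoly_one hn, eulerPoly_zero, neg_add_cancel]

theorem eulerPoly_add (n : ℕ) (x y : ℝ) :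
    eulerPoly n (x + y) =
      ∑ j ∈ range (n + 1), (n.choose j : ℝ) * eulerPoly (n - j) x * y ^ j := by
  simp only [eulerPoly, add_comm x y, add_pow, mul_sum, sum_mul]
  rw [sum_comm' (t' := range (n + 1)) (s' := fun j => range (n - j + 1)) (by simp only [mem_range]; omega)]
  refine sum_congr rfl fun j _ => sum_congr rfl fun l _ => ?_
  have hc : (n.choose l : ℝ) * ((n - l).choose j) = n.choose j * ((n - j).choose l) := by
    exact_mod_cast Nat.choose_mul_choose_sub_comm n l j
  rw [Nat.sub_right_comm n l j]
  linear_combination (eulerNumber l : ℝ) * y ^ j * x ^ (n - j - l) * hc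

theorem eulerPoly_add_one_add_eulerPoly (n : ℕ) (x : ℝ) :
    eulerPoly n (x + 1) + eulerPoly n x = 2 * x ^ n := by
  have h₁ := eulerPoly_add n 1 x
  have h₀ := eulerPoly_add n 0 x
  rw [add_comm 1 x] at h₁
  rw [zero_add] at h₀
  rw [h₁, h₀, ← sum_add_distrib, sum_eq_single_of_mem n (self_mem_range_succ n)]
  · rw [Nat.sub_self, ← add_mul, ← mul_add, eulerPoly_one_add_eulerPoly_zero, if_pos rfl,
      Nat.choose_self, Nat.cast_one, one_mul]
  · intro j hj hjn
    have : n - j ≠ 0 := by simp only [mem_range] at hj; omega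
    rw [← add_mul, ← mul_add, eulerPoly_one_add_eulerPoly_zero, if_neg this]
    ring

theorem two_mul_sum_range_neg_one_pow_mul_pow (n m : ℕ) :
    2 * ∑ u ∈ range m, (-1 : ℝ) ^ u * (u : ℝ) ^ n =
      eulerPoly n 0 - (-1) ^ m * eulerPoly n m := by
  have h := sum_range_sub' (fun u : ℕ => (-1 : ℝ) ^ u * eulerPoly n u) m
  rw [pow_zero, one_mul, Nat.cast_zero] at h
  rw [← h, mul_sum]
  refine sum_congr rfl fun u _ => ?_
  push_cast
  linear_combination -(-1 : ℝ) ^ u * eulerPoly_add_one_add_eulerPoly n u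

theorem eulerFun_eq_eulerPoly {x : ℝ} (hx : x ∈ Set.Ico 0 1) (p : ℕ) :
    eulerFun p x = eulerPoly p x := by
  simp [eulerFun, Int.floor_eq_zero_iff.mpr hx]

theorem mul_eulerPoly (p : ℕ) (x : ℝ) :
    x * eulerPoly p x =
      ∑ v ∈ range (p + 1), (p.choose v : ℝ) * eulerNumber v * x ^ (p + 1 - v) := by
  rw [eulerPoly, mul_sum]
  refine sum_congr rfl fun v hv => ?_
  rw [show p + 1 - v = p - v + 1 by simp only [mem_range] at hv; omega]
  ring

theorem dcSum_one_eq_sum_range (p m : ℕ) :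
    dcSum p 1 m = -2 * ∑ u ∈ range m, (-1 : ℝ) ^ u * ((u : ℝ) / m * eulerPoly p (u / m)) := by
  rcases Nat.eq_zero_or_pos m with rfl | hm
  · simp [dcSum]
  rw [dcSum, range_eq_Ico, sum_eq_sum_Ico_succ_bot hm, Nat.cast_zero, zero_div, zero_mul,
    mul_zero, zero_add, mul_sum, mul_sum]
  refine sum_congr rfl fun u hu => ?_
  obtain ⟨hu₁, hum⟩ := mem_Ico.mp hu
  have hx : (u : ℝ) / m ∈ Set.Ico 0 1 :=
    ⟨by positivity, (div_lt_one (by exact_mod_cast hm)).mpr (by exact_mod_cast hum)⟩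
  rw [Nat.cast_one, one_mul, eulerFun_eq_eulerPoly hx, ← Nat.sub_add_cancel hu₁, pow_succ]
  push_cast
  ring

theorem dcSum_one_general (p m : ℕ) (hmodd : Odd m) :
    dcSum p 1 m =
      -∑ v ∈ Finset.range (p + 1),
          (p.choose v : ℝ) * (eulerNumber v : ℝ) * ((m : ℝ) ^ (p + 1 - v))⁻¹ *
            (eulerPoly (p - v + 1) (m : ℝ) + (eulerNumber (p - v + 1) : ℝ)) := by
  have hswap : ∑ u ∈ range m, (-1 : ℝ) ^ u * ((u : ℝ) / m * eulerPoly p (u / m)) =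
      ∑ v ∈ range (p + 1), (p.choose v : ℝ) * eulerNumber v * ((m : ℝ) ^ (p + 1 - v))⁻¹ *
        ∑ u ∈ range m, (-1 : ℝ) ^ u * (u : ℝ) ^ (p + 1 - v) := by
    simp only [mul_eulerPoly, mul_sum, div_pow]
    rw [sum_comm]
    exact sum_congr rfl fun v _ => sum_congr rfl fun u _ => by ring
  rw [dcSum_one_eq_sum_range, hswap, mul_sum, ← sum_neg_distrib]
  refine sum_congr rfl fun v hv => ?_
  have hsum := two_mul_sum_range_neg_one_pow_mul_pow (p + 1 - v) m
  rw [hmodd.neg_one_pow, eulerPoly_zero] at hsum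
  rw [show p - v + 1 = p + 1 - v by simp only [mem_range] at hv; omega]
  linear_combination -(p.choose v : ℝ) * eulerNumber v * ((m : ℝ) ^ (p + 1 - v))⁻¹ * hsum

/-- Theorem 3: for `p ≥ 1` and odd positive `m`,
`T_p(1, m) = −∑_{v=0}^{p} C(p,v) E_v m^{−(p+1−v)} (E_{p−v+1}(m) + E_{p−v+1})`. -/
theorem dcSum_one (p m : ℕ) (hp : 1 ≤ p) (hm : 0 < m) (hmodd : Odd m) :
    dcSum p 1 m =
      -∑ v ∈ Finset.range (p + 1),
          (p.choose v : ℝ) * (eulerNumber v : ℝ) * ((m : ℝ) ^ (p + 1 - v))⁻¹ *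
            (eulerPoly (p - v + 1) (m : ℝ) + (eulerNumber (p - v + 1) : ℝ)) :=
  dcSum_one_general p m hmodd
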